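/- The matrix of E₁^w over the standard even form factors as a product of elementary orthogonal generators: with n = 2r, the (n+2)×(n+2) matrix with identity diagonal, last column (−w₁,…,−w_n, −q(w), 1)ᵗ pattern and row n+1 containing wᵗψ̃_r in the first n entries, equals ∏_{i=1}^{n−1} oe_{i,n+2}(−w_i/2) · oe_{n,n+2}(−w_n) · ∏_{i=1}^{n−1} oe_{n−i,n+2}(−w_{n−i}/2). -/

import Mathlib

/-! The matrices `radicalExp x = 1 + Σ xᵢ e_{i,n+2} − Σ (xψ̃)ⱼ e_{n+1,j} − q(x) e_{n+1,n+2}`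
satisfy `radicalExp (x + y) = radicalExp x * radicalExp y`: in a product the only cross term is
`−(xψ̃y) e_{n+1,n+2}`, which is exactly the polarization of `q`. Now `E₁^w = radicalExp (−w)`, and
`oe_{i,n+2}(z) = radicalExp (z eᵢ)` because `ψ̃` has zero diagonal. So the product equals
`radicalExp` of the sum of the `z eᵢ`, and that sum is `−w`: each index `i < n` occurs twice with
coefficient `−wᵢ/2`, the index `n` once with `−w_n`. -/

open Matrix

variable {R : Type*} [CommRing R] {r : ℕ}

/-- The standard hyperbolic symmetric matrix ψ̃_r of size 2r×2r. -/
def psi (R : Type*) [CommRing R] (r : ℕ) : Matrix (Fin (2*r)) (Fin (2*r)) R :=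
  Matrix.of fun k l =>
    if l.1 = (if k.1 % 2 = 0 then k.1 + 1 else k.1 - 1) then 1 else 0

/-- The involution σ on {1,…,2r+2} (0-based), swapping each hyperbolic pair. -/
def sig2 (k : Fin (2*r+2)) : Fin (2*r+2) :=
  ⟨if k.1 % 2 = 0 then k.1 + 1 else k.1 - 1, by have := k.isLt; split <;> omega⟩

/-- The elementary orthogonal generator oe_{i,j}(z) = I + z·e_{i,j} − z·e_{σ(j),σ(i)}
of size (2r+2)×(2r+2). -/
def oe2 (i j : Fin (2*r+2)) (z : R) : Matrix (Fin (2*r+2)) (Fin (2*r+2)) R :=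
  1 + Matrix.single i j z - Matrix.single (sig2 j) (sig2 i) z

/-- The inclusion Fin 2r → Fin (2r+2). -/
def emb (i : Fin (2*r)) : Fin (2*r+2) := ⟨i.1, by have := i.isLt; omega⟩

/-- The index n+1 (0-based: 2r). -/
def rowB : Fin (2*r+2) := ⟨2*r, by omega⟩
/-- The index n+2 (0-based: 2r+1). -/
def colL : Fin (2*r+2) := ⟨2*r+1, by omega⟩

/-- The matrix of E₁^w: identity diagonal, last column (−w₁,…,−w_n,−q(w),1)ᵗ, and
row n+1 with wᵗψ̃_r in its first n entries, where q(w) = (1/2)·wψ̃_rwᵗ. -/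
def E1mat [Invertible (2 : R)] (w : Fin (2*r) → R) :
    Matrix (Fin (2*r+2)) (Fin (2*r+2)) R :=
  1 + (∑ i : Fin (2*r), Matrix.single (emb i) colL (-(w i)))
    + (∑ j : Fin (2*r), Matrix.single rowB (emb j) (Matrix.vecMul w (psi R r) j))
    + Matrix.single rowB colL (-(⅟(2 : R) * (w ⬝ᵥ (psi R r).mulVec w)))

theorem Fin.sum_univ_eq_sum_init_add_last {M : Type*} [AddCommMonoid M] {N : ℕ} (hN : 0 < N)
    (f : Fin N → M) :
    ∑ j, f j = ∑ i : Fin (N - 1), f ⟨i, by omega⟩ + f ⟨N - 1, by omega⟩ := by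
  obtain ⟨m, rfl⟩ : ∃ m, N = m + 1 := ⟨N - 1, by omega⟩
  -- `m + 1 - 1` reduces to `m`, so the two sides agree with `Fin.sum_univ_castSucc` up to defeq
  exact Fin.sum_univ_castSucc f

lemma sum_single_half_add_single_last_add_sum_single_half_rev {S : Type*} [Semiring S]
    [Invertible (2 : S)] {N : ℕ} (hN : 0 < N) (v : Fin N → S) :
    ∑ i : Fin (N - 1), Pi.single ⟨i, by omega⟩ (⅟2 * v ⟨i, by omega⟩)
      + Pi.single ⟨N - 1, by omega⟩ (v ⟨N - 1, by omega⟩)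
      + ∑ i : Fin (N - 1), Pi.single ⟨N - 2 - i, by omega⟩ (⅟2 * v ⟨N - 2 - i, by omega⟩) = v := by
  set g : Fin N → Fin N → S := fun j => Pi.single j (⅟2 * v j)
  have hrev : ∑ i : Fin (N - 1), g ⟨N - 2 - i, by omega⟩ = ∑ i : Fin (N - 1), g ⟨i, by omega⟩ :=
    Fintype.sum_equiv Fin.revPerm _ _ fun i => congrArg g <| Fin.ext <| by
      simp only [Fin.revPerm_apply, Fin.val_rev]; omega
  have hdouble : ∀ j, g j + g j = Pi.single j (v j) := fun j => by
    rw [← Pi.single_add, ← add_mul, invOf_two_add_invOf_two, one_mul]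
  conv_rhs => rw [← Finset.univ_sum_single v, Fin.sum_univ_eq_sum_init_add_last hN]
  change ∑ i : Fin (N - 1), g _ + _ + ∑ i : Fin (N - 1), g _ = _
  rw [hrev, add_right_comm, ← Finset.sum_add_distrib]
  simp only [hdouble]

section Radical

variable {ι κ : Type*} [DecidableEq ι] [Fintype κ]

def radicalMatrix (e : κ → ι) (b l : ι) (x y : κ → R) (c : R) : Matrix ι ι R :=
  ∑ k, single (e k) l (x k) + ∑ k, single b (e k) (y k) + single b l c

variable {e : κ → ι} {b l : ι}

lemma radicalMatrix_add_radicalMatrix (x y x' y' : κ → R) (c c' : R) :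
    radicalMatrix e b l x y c + radicalMatrix e b l x' y' c'
      = radicalMatrix e b l (x + x') (y + y') (c + c') := by
  simp only [radicalMatrix, Pi.add_apply, single_add, Finset.sum_add_distrib]
  abel

lemma radicalMatrix_zero_zero (c : R) : radicalMatrix e b l 0 0 c = single b l c := by
  simp [radicalMatrix]

lemma radicalMatrix_mul_radicalMatrix [Fintype ι] (he : Function.Injective e) (hb : ∀ k, e k ≠ b)
    (hl : ∀ k, e k ≠ l) (hbl : b ≠ l) (x y x' y' : κ → R) (c c' : R) :
    radicalMatrix e b l x y c * radicalMatrix e b l x' y' c' = single b l (y ⬝ᵥ x') := by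
  have hl' : ∀ k, l ≠ e k := fun k => (hl k).symm
  simp only [radicalMatrix, add_mul, mul_add, Finset.sum_mul, Finset.mul_sum, ne_eq, hb, hl',
    hbl.symm, not_false_eq_true, single_mul_single_of_ne, Finset.sum_const_zero, add_zero,
    zero_add]
  calc _ = ∑ k, single b l (y k * x' k) := Finset.sum_congr rfl fun k _ => by
          rw [Finset.sum_eq_single k (fun i _ hi => by simp [he.ne hi]) (by simp),
            single_mul_single_same]
    _ = _ := (map_sum (singleAddMonoidHom (α := R) b l) _ _).symm

variable [Invertible (2 : R)]

def radicalExp (e : κ → ι) (b l : ι) (M : Matrix κ κ R) (x : κ → R) : Matrix ι ι R :=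
  1 + radicalMatrix e b l x (-(x ᵥ* M)) (-(⅟2 * (x ⬝ᵥ M *ᵥ x)))

variable {M : Matrix κ κ R}

lemma radicalExp_zero : radicalExp e b l M (0 : κ → R) = 1 := by
  simp [radicalExp, radicalMatrix]

lemma radicalExp_add [Fintype ι] (he : Function.Injective e) (hb : ∀ k, e k ≠ b)
    (hl : ∀ k, e k ≠ l) (hbl : b ≠ l) (hM : M.IsSymm) (x y : κ → R) :
    radicalExp e b l M (x + y) = radicalExp e b l M x * radicalExp e b l M y := by
  have hsymm : y ⬝ᵥ M *ᵥ x = x ⬝ᵥ M *ᵥ y := by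
    rw [dotProduct_mulVec, ← mulVec_transpose, hM.eq, dotProduct_comm]
  simp only [radicalExp, add_mul, mul_add, one_mul, mul_one,
    radicalMatrix_mul_radicalMatrix he hb hl hbl, ← radicalMatrix_zero_zero (e := e)]
  rw [show ∀ A B C D : Matrix ι ι R, A + B + (C + D) = A + (B + C + D) from fun _ _ _ _ => by abel,
    radicalMatrix_add_radicalMatrix, radicalMatrix_add_radicalMatrix]
  congr 2
  · rw [add_zero]
  · rw [add_zero, add_vecMul, neg_add]
  · rw [neg_dotProduct, ← dotProduct_mulVec, add_dotProduct]
    simp only [mulVec_add, dotProduct_add, hsymm]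
    linear_combination (-(x ⬝ᵥ M *ᵥ y)) * invOf_mul_self (2 : R)

lemma radicalExp_sum_ofFn [Fintype ι] (he : Function.Injective e) (hb : ∀ k, e k ≠ b)
    (hl : ∀ k, e k ≠ l) (hbl : b ≠ l) (hM : M.IsSymm) {n : ℕ} (x : Fin n → κ → R) :
    (List.ofFn fun i => radicalExp e b l M (x i)).prod = radicalExp e b l M (∑ i, x i) := by
  induction n with
  | zero => simp [radicalExp_zero]
  | succ n ih =>
    rw [List.ofFn_succ, List.prod_cons, ih, Fin.sum_univ_succ, radicalExp_add he hb hl hbl hM]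

lemma radicalExp_single [DecidableEq κ] {a s : κ} (hMa : M a = Pi.single s 1) (hs : s ≠ a)
    (z : R) : radicalExp e b l M (Pi.single a z) = 1 + single (e a) l z - single b (e s) z := by
  have hvecMul : Pi.single a z ᵥ* M = Pi.single s z := by
    rw [single_vecMul, row, hMa, ← Pi.single_smul, smul_eq_mul, mul_one]
  have hcol : ∑ k, single (e k) l (Pi.single a z k) = single (e a) l z := by
    simp_rw [Pi.apply_single (fun k => single (e k) l) (fun _ => single_zero _ _),
      Fintype.sum_pi_single']
  have hrow : ∑ k, single b (e k) (Pi.single s (-z) k) = single b (e s) (-z) := by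
    simp_rw [Pi.apply_single (fun k => single b (e k)) (fun _ => single_zero _ _),
      Fintype.sum_pi_single']
  rw [radicalExp, radicalMatrix, dotProduct_mulVec, hvecMul, ← Pi.single_neg, hcol, hrow,
    single_dotProduct, Pi.single_eq_of_ne hs, mul_zero, mul_zero, neg_zero, single_zero,
    add_zero, sub_eq_add_neg, single_neg, add_assoc]

end Radical

def hypSwap (k : Fin (2*r)) : Fin (2*r) :=
  ⟨if k.1 % 2 = 0 then k.1 + 1 else k.1 - 1, by have := k.isLt; split <;> omega⟩

lemma hypSwap_ne (k : Fin (2*r)) : hypSwap k ≠ k := by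
  simp only [Ne, Fin.ext_iff, hypSwap]
  split <;> omega

lemma psi_apply (k : Fin (2*r)) : psi R r k = Pi.single (hypSwap k) 1 := by
  funext l
  simp [psi, hypSwap, Pi.single_apply, Fin.ext_iff]

lemma psi_isSymm : (psi R r).IsSymm := by
  ext k l
  simp only [transpose_apply, psi, of_apply]
  have := k.isLt
  have := l.isLt
  congr 1
  apply propext
  split_ifs <;> omega

lemma emb_injective : Function.Injective (emb (r := r)) := by
  intro a b h
  simpa [emb, Fin.ext_iff] using h

lemma emb_ne_rowB (k : Fin (2*r)) : emb k ≠ rowB := by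
  rw [Ne, Fin.ext_iff]; exact k.isLt.ne

lemma emb_ne_colL (k : Fin (2*r)) : emb k ≠ colL := by
  rw [Ne, Fin.ext_iff]; exact (Nat.lt_succ_of_lt k.isLt).ne

lemma rowB_ne_colL : (rowB : Fin (2*r+2)) ≠ colL := by
  simp [rowB, colL, Fin.ext_iff]

lemma sig2_emb (k : Fin (2*r)) : sig2 (emb k) = emb (hypSwap k) := rfl

lemma sig2_colL : sig2 (colL : Fin (2*r+2)) = rowB := by
  simp [sig2, colL, rowB, Nat.add_mod]

lemma oe2_emb_colL [Invertible (2 : R)] (a : Fin (2*r)) (z : R) :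
    oe2 (emb a) colL z = radicalExp emb rowB colL (psi R r) (Pi.single a z) := by
  rw [radicalExp_single (psi_apply a) (hypSwap_ne a), oe2, sig2_colL, sig2_emb]

lemma E1mat_eq_radicalExp [Invertible (2 : R)] (w : Fin (2*r) → R) :
    E1mat w = radicalExp emb rowB colL (psi R r) (-w) := by
  simp [E1mat, radicalExp, radicalMatrix, add_assoc, neg_vecMul, mulVec_neg, dotProduct_neg]

theorem E1_factorization [Invertible (2 : R)] (hr : 1 ≤ r) (w : Fin (2*r) → R) :
    E1mat w =
      (List.ofFn (fun i : Fin (2*r-1) =>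
          oe2 (emb ⟨i.1, by have := i.isLt; omega⟩) colL
            (-(⅟(2 : R) * w ⟨i.1, by have := i.isLt; omega⟩)))).prod
        * oe2 (emb ⟨2*r-1, by omega⟩) colL (-(w ⟨2*r-1, by omega⟩))
        * (List.ofFn (fun i : Fin (2*r-1) =>
          oe2 (emb ⟨2*r-2-i.1, by have := i.isLt; omega⟩) colL
            (-(⅟(2 : R) * w ⟨2*r-2-i.1, by have := i.isLt; omega⟩)))).prod := by
  simp only [oe2_emb_colL, radicalExp_sum_ofFn emb_injective emb_ne_rowB emb_ne_colL rowB_ne_colL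
    psi_isSymm]
  rw [← radicalExp_add emb_injective emb_ne_rowB emb_ne_colL rowB_ne_colL psi_isSymm,
    ← radicalExp_add emb_injective emb_ne_rowB emb_ne_colL rowB_ne_colL psi_isSymm,
    E1mat_eq_radicalExp]
  congr 1
  simpa using (sum_single_half_add_single_last_add_sum_single_half_rev
    (show 0 < 2 * r by omega) (-w)).symm
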